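/- Let r ≥ 3, and let E and Ẽ be homogeneous r-th order linear ODEs of second Arnold form (coefficients of the zeroth- and first-order terms identically zero, i.e., of the form x^{(r)} + a_{r−1}x^{(r−1)} + ⋯ + a₂x'' = 0) on open intervals I and T(I) respectively. Let T, X₁, X₀ : I → ℝ be smooth with T'(t)X₁(t) ≠ 0 for all t, and suppose the fiber-preserving transformation t̃ = T(t), x̃ = X₁(t)x + X₀(t) maps E to Ẽ and its inverse maps Ẽ to E (for every solution y of Ẽ, the function t ↦ (y(T(t)) − X₀(t))/X₁(t) is a solution of E). Then the functions ψ₁ := 1/X₁ and ψ₂ := T/X₁ are linearly independent solutions of E, and X₀/X₁ is also a solution of E; in particular T = ψ₂/ψ₁. -/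

import Mathlib

open Set

/-- The left-hand side `x^(r)(t) + ∑_{i<r} aᵢ(t) x^(i)(t)` of an `r`-th order linear ODE. -/
noncomputable def odeLHS (r : ℕ) (a : ℕ → ℝ → ℝ) (x : ℝ → ℝ) (t : ℝ) : ℝ :=
  iteratedDeriv r x t + ∑ i ∈ Finset.range r, a i t * iteratedDeriv i x t

/-- `x` is a solution on `I` of the linear ODE `x^(r) + ∑_{i<r} aᵢ x^(i) = b`:
it is smooth on `I` and satisfies the identity on `I`. -/
def IsSolODE (r : ℕ) (a : ℕ → ℝ → ℝ) (b : ℝ → ℝ) (I : Set ℝ) (x : ℝ → ℝ) : Prop :=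
  ContDiffOn ℝ (⊤ : ℕ∞) x I ∧ ∀ t ∈ I, odeLHS r a x t = b t

/-- `I ⊆ ℝ` is a (nonempty) open interval. -/
def IsOpenInterval (I : Set ℝ) : Prop := IsOpen I ∧ I.OrdConnected ∧ I.Nonempty

/-- The fiber-preserving transformation `t̃ = T(t)`, `x̃ = X₁(t)x + X₀(t)` maps the
`r`-th order linear ODE with coefficients `a`, `b` on `I` to the one with coefficients
`a'`, `b'` on `T(I)`: for every solution `x` of the source equation the function
`y(s) = X₁(T⁻¹(s))x(T⁻¹(s)) + X₀(T⁻¹(s))` is a solution of the target equation. -/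
def FPMapsODE (r : ℕ) (I : Set ℝ) (a : ℕ → ℝ → ℝ) (b : ℝ → ℝ)
    (a' : ℕ → ℝ → ℝ) (b' : ℝ → ℝ) (T X₁ X₀ : ℝ → ℝ) : Prop :=
  ∀ x : ℝ → ℝ, IsSolODE r a b I x →
    ∃ y : ℝ → ℝ, IsSolODE r a' b' (T '' I) y ∧ ∀ t ∈ I, y (T t) = X₁ t * x t + X₀ t

/-
An equation is of second Arnold form exactly when every affine function `s ↦ c + d s`
solves it. Pulling the solutions `0`, `1` and `s` of `Ẽ` back along the
inverse transformation gives the solutions `-X₀/X₁`, `(1 - X₀)/X₁` and `(T - X₀)/X₁` of `E`,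
and their differences are `1/X₁`, `T/X₁` and `X₀/X₁`. Since `T' ≠ 0`, `T` is not constant,
so `1/X₁` and `T/X₁` are independent.
-/

lemma iteratedDeriv_const_add_mul_eq_zero {n : ℕ} (hn : 2 ≤ n) (c d s : ℝ) :
    iteratedDeriv n (fun s => c + d * s) s = 0 := by
  rw [iteratedDeriv_const_add (by omega), iteratedDeriv_const_mul_field, iteratedDeriv_fun_id,
    if_neg (by omega), if_neg (by omega), mul_zero]

lemma isSolODE_const_add_mul {r : ℕ} (hr : 2 ≤ r) {a : ℕ → ℝ → ℝ} {J : Set ℝ}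
    (ha : ∀ s ∈ J, a 0 s = 0 ∧ a 1 s = 0) (c d : ℝ) :
    IsSolODE r a (fun _ => 0) J (fun s => c + d * s) := by
  refine ⟨contDiffOn_const.add (contDiffOn_const.mul contDiffOn_id), fun s hs => ?_⟩
  rw [odeLHS, iteratedDeriv_const_add_mul_eq_zero hr, zero_add]
  refine Finset.sum_eq_zero fun i _ => ?_
  match i with
  | 0 => rw [(ha s hs).1, zero_mul]
  | 1 => rw [(ha s hs).2, zero_mul]
  | i + 2 => rw [iteratedDeriv_const_add_mul_eq_zero (by omega), mul_zero]

lemma IsSolODE.sub {r : ℕ} {a : ℕ → ℝ → ℝ} {I : Set ℝ} (hI : IsOpen I) {f g : ℝ → ℝ}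
    (hf : IsSolODE r a (fun _ => 0) I f) (hg : IsSolODE r a (fun _ => 0) I g) :
    IsSolODE r a (fun _ => 0) I (f - g) := by
  refine ⟨hf.1.sub hg.1, fun t ht => ?_⟩
  have hderiv (i : ℕ) : iteratedDeriv i (f - g) t = iteratedDeriv i f t - iteratedDeriv i g t :=
    iteratedDeriv_sub ((hf.1.contDiffAt (hI.mem_nhds ht)).of_le (mod_cast le_top))
      ((hg.1.contDiffAt (hI.mem_nhds ht)).of_le (mod_cast le_top))
  have hlhs : odeLHS r a (f - g) t = odeLHS r a f t - odeLHS r a g t := by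
    simp only [odeLHS, hderiv, mul_sub, Finset.sum_sub_distrib]
    ring
  rw [hlhs, hf.2 t ht, hg.2 t ht, sub_zero]

lemma eq_zero_of_const_add_mul_eqOn_zero {I : Set ℝ} (hI : IsOpen I) {T : ℝ → ℝ} {t : ℝ}
    (ht : t ∈ I) (hT : deriv T t ≠ 0) {c₁ c₂ : ℝ} (h : ∀ s ∈ I, c₁ + c₂ * T s = 0) :
    c₁ = 0 ∧ c₂ = 0 := by
  obtain rfl : c₂ = 0 := by
    by_contra hc₂
    have hconst : T =ᶠ[nhds t] fun _ => -c₁ / c₂ :=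
      Filter.eventuallyEq_of_mem (hI.mem_nhds ht) fun s hs => by
        field_simp
        linarith [h s hs]
    exact hT (by rw [hconst.deriv_eq, deriv_const])
  exact ⟨by simpa using h t ht, rfl⟩

theorem stmt12_general (r : ℕ) (hr : 3 ≤ r) (I : Set ℝ) (hI : IsOpenInterval I)
    (a a' : ℕ → ℝ → ℝ)
    (T X₁ X₀ : ℝ → ℝ)
    (hTX : ∀ t ∈ I, deriv T t * X₁ t ≠ 0)
    (hA' : ∀ s ∈ T '' I, a' 0 s = 0 ∧ a' 1 s = 0)
    (hinv : ∀ y : ℝ → ℝ, IsSolODE r a' (fun _ => 0) (T '' I) y →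
      IsSolODE r a (fun _ => 0) I (fun t => (y (T t) - X₀ t) / X₁ t)) :
    IsSolODE r a (fun _ => 0) I (fun t => 1 / X₁ t) ∧
    IsSolODE r a (fun _ => 0) I (fun t => T t / X₁ t) ∧
    (∀ c₁ c₂ : ℝ, (∀ t ∈ I, c₁ * (1 / X₁ t) + c₂ * (T t / X₁ t) = 0) →
      c₁ = 0 ∧ c₂ = 0) ∧
    IsSolODE r a (fun _ => 0) I (fun t => X₀ t / X₁ t) ∧
    ∀ t ∈ I, T t = (T t / X₁ t) / (1 / X₁ t) := by
  obtain ⟨hIo, -, t₀, ht₀⟩ := hI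
  have hX₁ (t : ℝ) (ht : t ∈ I) : X₁ t ≠ 0 := right_ne_zero_of_mul (hTX t ht)
  have hpull (c d : ℝ) : IsSolODE r a (fun _ => 0) I (fun t => (c + d * T t - X₀ t) / X₁ t) :=
    hinv _ (isSolODE_const_add_mul (by omega) hA' c d)
  have hψ₁ : IsSolODE r a (fun _ => 0) I (fun t => 1 / X₁ t) := by
    convert (hpull 1 0).sub hIo (hpull 0 0) using 1
    ext t; simp only [Pi.sub_apply]; ring
  refine ⟨hψ₁, ?_, fun c₁ c₂ h => ?_, ?_, fun t ht => ?_⟩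
  · convert (hpull 0 1).sub hIo (hpull 0 0) using 1
    ext t; simp only [Pi.sub_apply]; ring
  · refine eq_zero_of_const_add_mul_eqOn_zero hIo ht₀ (left_ne_zero_of_mul (hTX t₀ ht₀))
      fun t ht => ?_
    have := h t ht
    field_simp [hX₁ t ht] at this
    simpa using this
  · convert hψ₁.sub hIo (hpull 1 0) using 1
    ext t; simp only [Pi.sub_apply]; ring
  · field_simp [hX₁ t ht]

/-- if a fiber-preserving transformation `t̃ = T(t)`, `x̃ = X₁(t)x + X₀(t)`
with `T' X₁ ≠ 0` maps a homogeneous `r`-th order (`r ≥ 3`) linear ODE `E` of second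
Arnold form (`a₀ ≡ 0`, `a₁ ≡ 0`) to another such equation, with inverse mapping back,
then `ψ₁ = 1/X₁` and `ψ₂ = T/X₁` are linearly independent solutions of `E`, `X₀/X₁` is
also a solution of `E`, and `T = ψ₂/ψ₁`. -/
theorem stmt12 (r : ℕ) (hr : 3 ≤ r) (I : Set ℝ) (hI : IsOpenInterval I)
    (a a' : ℕ → ℝ → ℝ)
    (T X₁ X₀ : ℝ → ℝ)
    (hT : ContDiffOn ℝ (⊤ : ℕ∞) T I) (hX₁ : ContDiffOn ℝ (⊤ : ℕ∞) X₁ I) (hX₀ : ContDiffOn ℝ (⊤ : ℕ∞) X₀ I)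
    (hTX : ∀ t ∈ I, deriv T t * X₁ t ≠ 0)
    (ha : ∀ i, ContDiffOn ℝ (⊤ : ℕ∞) (a i) I) (ha' : ∀ i, ContDiffOn ℝ (⊤ : ℕ∞) (a' i) (T '' I))
    (hA : ∀ t ∈ I, a 0 t = 0 ∧ a 1 t = 0)
    (hA' : ∀ s ∈ T '' I, a' 0 s = 0 ∧ a' 1 s = 0)
    (hmaps : FPMapsODE r I a (fun _ => 0) a' (fun _ => 0) T X₁ X₀)
    (hinv : ∀ y : ℝ → ℝ, IsSolODE r a' (fun _ => 0) (T '' I) y →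
      IsSolODE r a (fun _ => 0) I (fun t => (y (T t) - X₀ t) / X₁ t)) :
    IsSolODE r a (fun _ => 0) I (fun t => 1 / X₁ t) ∧
    IsSolODE r a (fun _ => 0) I (fun t => T t / X₁ t) ∧
    (∀ c₁ c₂ : ℝ, (∀ t ∈ I, c₁ * (1 / X₁ t) + c₂ * (T t / X₁ t) = 0) →
      c₁ = 0 ∧ c₂ = 0) ∧
    IsSolODE r a (fun _ => 0) I (fun t => X₀ t / X₁ t) ∧
    ∀ t ∈ I, T t = (T t / X₁ t) / (1 / X₁ t) :=
  stmt12_general r hr I hI a a' T X₁ X₀ hTX hA' hinv
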